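/- arXiv:2408.07524 — 5 statements merged into one kernel-verified Lean document; each statement's English description precedes it below -/
import Mathlib

section
/- Let P be a finite ground normal program. Then the answer sets of P coincide with the answer sets of its WF reduct: AS(P) = AS(P^WF). -/
open scoped Classical

/-- A ground normal rule: a head atom, a finite positive body and a finite negative body. -/
structure GRule (α : Type) where
  head : α
  pos : Finset α
  neg : Finset α

namespace ASP

variable {α ι : Type}

/-- The Gelfond–Lifschitz reduct of a program `P` w.r.t. an interpretation `I`:
the set of positive rules `(head r, pos r)` for rules whose negative body avoids `I`. -/
def glReduct (P : Set (GRule α)) (I : Set α) : Set (α × Finset α) :=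
  {hb | ∃ r ∈ P, (∀ c ∈ r.neg, c ∉ I) ∧ hb = (r.head, r.pos)}

/-- `J` is a model of a set of positive rules `Q`. -/
def IsModelPos (Q : Set (α × Finset α)) (J : Set α) : Prop :=
  ∀ hb ∈ Q, (∀ b ∈ hb.2, b ∈ J) → hb.1 ∈ J

/-- `A` is an answer set (stable model) of `P`. -/
def IsAnswerSet (P : Set (GRule α)) (A : Set α) : Prop :=
  IsModelPos (glReduct P A) A ∧ ∀ B, B ⊂ A → ¬ IsModelPos (glReduct P A) B

/-- The set of answer sets of `P`. -/
def AS (P : Set (GRule α)) : Set (Set α) := {A | IsAnswerSet P A}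

/-- Operator deriving new true atoms, given a three-valued interpretation `I = (I_T, I_F)`. -/
def opTrue (P : Set (GRule α)) (I : Set α × Set α) : Set α →o Set α where
  toFun T := {a | a ∉ I.1 ∧ ∃ r ∈ P, r.head = a ∧ (∀ b ∈ r.pos, b ∈ I.1 ∪ T) ∧
    ∀ c ∈ r.neg, c ∈ I.2}
  monotone' := by
    intro T T' hT a ha
    obtain ⟨h1, r, hr, hh, hp, hn⟩ := ha
    exact ⟨h1, r, hr, hh, fun b hb => (hp b hb).imp id fun h => hT h, hn⟩

/-- Operator deriving new false atoms, given a three-valued interpretation `I = (I_T, I_F)`. -/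
def opFalse (P : Set (GRule α)) (I : Set α × Set α) : Set α →o Set α where
  toFun F := {a | a ∉ I.2 ∧ ∀ r ∈ P, r.head = a →
    (∃ b ∈ r.pos, b ∈ I.2 ∪ F) ∨ ∃ c ∈ r.neg, c ∈ I.1}
  monotone' := by
    intro F F' hF a ha
    refine ⟨ha.1, fun r hr hh => ?_⟩
    rcases ha.2 r hr hh with ⟨b, hb, hbm⟩ | h
    · exact Or.inl ⟨b, hb, hbm.imp id fun h => hF h⟩
    · exact Or.inr h

/-- The iterated fixpoint operator: `IFP(I) = I ⊔ (lfp (opTrue I), gfp (opFalse I))`. -/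
def IFP (P : Set (GRule α)) (I : Set α × Set α) : Set α × Set α :=
  I ⊔ (OrderHom.lfp (opTrue P I), OrderHom.gfp (opFalse P I))

/-- The well-founded model of `P`: the least fixpoint of `IFP`
(as the infimum of all prefixpoints of the monotone operator `IFP`). -/
def WFM (P : Set (GRule α)) : Set α × Set α :=
  sInf {I | IFP P I ≤ I}

/-- The WF reduct of `P`: delete rules whose positive body meets the false atoms or whose
negative body meets the true atoms of the WFM, and remove from the remaining rules the
true atoms from positive bodies and the false atoms from negative bodies. -/
noncomputable def WFreduct (P : Set (GRule α)) : Set (GRule α) :=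
  {r' | ∃ r ∈ P, (∀ b ∈ r.pos, b ∉ (WFM P).2) ∧ (∀ c ∈ r.neg, c ∉ (WFM P).1) ∧
    r' = ⟨r.head, r.pos.filter (fun b => b ∉ (WFM P).1),
          r.neg.filter (fun c => c ∉ (WFM P).2)⟩}

/-- The set of atoms occurring in a set of rules (as heads or in bodies). -/
def atomsOf (R : Set (GRule α)) : Set α :=
  {a | ∃ r ∈ R, a = r.head ∨ a ∈ r.pos ∨ a ∈ r.neg}

/-- `R` is a relevance-closed subprogram of `P`. -/
def RelevanceClosed (P R : Set (GRule α)) : Prop :=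
  R ⊆ P ∧ ∀ r ∈ P, r.head ∈ atomsOf R → r ∈ R

/-- Signed edge of the dependency graph of `P`; `s = true` marks a negative edge. -/
def Edge (P : Set (GRule α)) (x y : α) (s : Bool) : Prop :=
  ∃ r ∈ P, r.head = x ∧ ((s = false ∧ y ∈ r.pos) ∨ (s = true ∧ y ∈ r.neg))

/-- `Reaches P x y b`: there is a nonempty walk in the signed dependency graph from `x`
to `y` whose number of negative edges has parity `b` (`true` = odd). -/
inductive Reaches (P : Set (GRule α)) : α → α → Bool → Prop
  | single {x y s} : Edge P x y s → Reaches P x y s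
  | step {x y z s t} : Edge P x y s → Reaches P y z t → Reaches P x z (xor s t)

/-- `P` has no odd loops over negation. -/
def OLONFree (P : Set (GRule α)) : Prop := ∀ a : α, ¬ Reaches P a a true

/-- The program of a world `w`: `P₀` plus the facts `aᵢ` for `i ∈ w`. -/
def worldProg (P0 : Set (GRule α)) (atom : ι → α) (w : Finset ι) : Set (GRule α) :=
  P0 ∪ {r | ∃ i ∈ w, r = ⟨atom i, ∅, ∅⟩}

/-- The probability of a world `w` of a PASP with index set `S`. -/
noncomputable def worldP (prob : ι → ℝ) (S w : Finset ι) : ℝ :=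
  (∏ i ∈ w, prob i) * ∏ i ∈ S \ w, (1 - prob i)

/-- The upper probability of a query `q` in the PASP `(P₀, S, atom, prob)`. -/
noncomputable def UP (P0 : Set (GRule α)) (atom : ι → α) (prob : ι → ℝ)
    (S : Finset ι) (q : α) : ℝ :=
  ∑ w ∈ S.powerset.filter (fun w => ∃ A ∈ AS (worldProg P0 atom w), q ∈ A),
    worldP prob S w

/-- The lower probability of a query `q` in the PASP `(P₀, S, atom, prob)`. -/
noncomputable def LP (P0 : Set (GRule α)) (atom : ι → α) (prob : ι → ℝ)
    (S : Finset ι) (q : α) : ℝ :=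
  ∑ w ∈ S.powerset.filter (fun w => ∀ A ∈ AS (worldProg P0 atom w), q ∈ A),
    worldP prob S w

/-- `(P₀, S, atom, prob)` is a PASP: `P₀` is finite, the probabilistic atoms are pairwise
distinct, none of them is the head of a rule of `P₀`, and probabilities lie in `[0,1]`. -/
def IsPASP (P0 : Set (GRule α)) (atom : ι → α) (prob : ι → ℝ) (S : Finset ι) : Prop :=
  P0.Finite ∧ Set.InjOn atom ↑S ∧ (∀ i ∈ S, ∀ r ∈ P0, r.head ≠ atom i) ∧
    ∀ i ∈ S, prob i ∈ Set.Icc (0 : ℝ) 1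

end ASP


section Aux

open ASP OrderHom

variable {α : Type} (P : Set (GRule α))

lemma lfpTrue_le {I J : Set α × Set α} (h : I ≤ J) :
    lfp (opTrue P I) ⊆ J.1 ∪ lfp (opTrue P J) := by
  apply lfp_le
  rintro a ⟨h1, r, hr, hh, hp, hn⟩
  by_cases haJ : a ∈ J.1
  · exact Or.inl haJ
  · refine Or.inr ?_
    rw [← map_lfp (opTrue P J)]
    refine ⟨haJ, r, hr, hh, fun b hb => ?_, fun c hc => h.2 (hn c hc)⟩
    rcases hp b hb with hb1 | hb1
    · exact Or.inl (h.1 hb1)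
    · exact hb1

lemma gfpFalse_le {I J : Set α × Set α} (h : I ≤ J) :
    gfp (opFalse P I) ⊆ J.2 ∪ gfp (opFalse P J) := by
  have key : gfp (opFalse P I) \ J.2 ≤ opFalse P J (gfp (opFalse P I) \ J.2) := by
    rintro x ⟨hx1, hx2⟩
    have hx' : x ∈ opFalse P I (gfp (opFalse P I)) := by
      rw [map_gfp]; exact hx1
    refine ⟨hx2, fun r hr hh => ?_⟩
    rcases hx'.2 r hr hh with ⟨b, hb, hbm⟩ | ⟨c, hc1, hc2⟩
    · refine Or.inl ⟨b, hb, ?_⟩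
      rcases hbm with hb2 | hb2
      · exact Or.inl (h.2 hb2)
      · by_cases hbJ : b ∈ J.2
        · exact Or.inl hbJ
        · exact Or.inr ⟨hb2, hbJ⟩
    · exact Or.inr ⟨c, hc1, h.1 hc2⟩
  intro a ha
  by_cases haJ : a ∈ J.2
  · exact Or.inl haJ
  · have hsub : gfp (opFalse P I) \ J.2 ⊆ gfp (opFalse P J) := le_gfp (opFalse P J) key
    exact Or.inr (hsub ⟨ha, haJ⟩)

lemma wfm_le {I : Set α × Set α} (h : IFP P I ≤ I) : WFM P ≤ I := sInf_le h

lemma pair_le {I : Set α × Set α} (h1 : lfp (opTrue P I) ⊆ I.1)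
    (h2 : gfp (opFalse P I) ⊆ I.2) : IFP P I ≤ I :=
  sup_le le_rfl (Prod.le_def.mpr ⟨h1, h2⟩)

lemma wfm_prefix : IFP P (WFM P) ≤ WFM P := by
  refine le_sInf fun I hI => ?_
  have hWI : WFM P ≤ I := sInf_le hI
  have hI' : ((lfp (opTrue P I), gfp (opFalse P I)) : Set α × Set α) ≤ I :=
    le_trans le_sup_right hI
  refine sup_le hWI (Prod.le_def.mpr ⟨?_, ?_⟩)
  · exact fun a ha => (lfpTrue_le P hWI ha).elim id (fun h => hI'.1 h)
  · exact fun a ha => (gfpFalse_le P hWI ha).elim id (fun h => hI'.2 h)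

lemma lfp_wfm : lfp (opTrue P (WFM P)) = ∅ := by
  have h : ((lfp (opTrue P (WFM P)), gfp (opFalse P (WFM P))) : Set α × Set α) ≤ WFM P :=
    le_trans le_sup_right (wfm_prefix P)
  ext a
  simp only [Set.mem_empty_iff_false, iff_false]
  intro ha
  have ha' : a ∈ opTrue P (WFM P) (lfp (opTrue P (WFM P))) := by
    rw [map_lfp]; exact ha
  exact ha'.1 (h.1 ha)

lemma gfp_wfm : gfp (opFalse P (WFM P)) = ∅ := by
  have h : ((lfp (opTrue P (WFM P)), gfp (opFalse P (WFM P))) : Set α × Set α) ≤ WFM P :=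
    le_trans le_sup_right (wfm_prefix P)
  ext a
  simp only [Set.mem_empty_iff_false, iff_false]
  intro ha
  have ha' : a ∈ opFalse P (WFM P) (gfp (opFalse P (WFM P))) := by
    rw [map_gfp]; exact ha
  exact ha'.1 (h.2 ha)

/-- Closure: a rule with true positive body and false negative body has a true head. -/
lemma closureT {r : GRule α} (hr : r ∈ P) (hpos : ∀ b ∈ r.pos, b ∈ (WFM P).1)
    (hneg : ∀ c ∈ r.neg, c ∈ (WFM P).2) : r.head ∈ (WFM P).1 := by
  by_contra h
  have hm : r.head ∈ opTrue P (WFM P) (lfp (opTrue P (WFM P))) :=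
    ⟨h, r, hr, rfl, fun b hb => Or.inl (hpos b hb), hneg⟩
  rw [map_lfp, lfp_wfm] at hm
  exact hm

/-- Coinduction against the (empty) gfp of `opFalse` at the WFM. -/
lemma falseCoind {G : Set α} (hG : G ≤ opFalse P (WFM P) G) : G = ∅ := by
  have h : G ⊆ gfp (opFalse P (WFM P)) := le_gfp (opFalse P (WFM P)) hG
  rw [gfp_wfm] at h
  exact Set.eq_empty_iff_forall_notMem.mpr fun x hx => h hx

/-- Every true atom of the WFM is supported by a rule with true body and false negative body. -/
lemma factT {a : α} (ha : a ∈ (WFM P).1) :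
    ∃ r ∈ P, r.head = a ∧ (∀ b ∈ r.pos, b ∈ (WFM P).1) ∧ ∀ c ∈ r.neg, c ∈ (WFM P).2 := by
  by_contra hno
  push_neg at hno
  set W' : Set α × Set α := ((WFM P).1 \ {a}, (WFM P).2) with hW'
  have hg : gfp (opFalse P W') ⊆ (WFM P).2 := by
    have : gfp (opFalse P W') = ∅ := by
      apply falseCoind
      intro x hx
      have hx' : x ∈ opFalse P W' (gfp (opFalse P W')) := by rw [map_gfp]; exact hx
      refine ⟨hx'.1, fun r hr hh => ?_⟩
      rcases hx'.2 r hr hh with ⟨b, hb, hbm⟩ | ⟨c, hc1, hc2⟩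
      · refine Or.inl ⟨b, hb, hbm⟩
      · exact Or.inr ⟨c, hc1, hc2.1⟩
    rw [this]; exact Set.empty_subset _
  have hlsub : lfp (opTrue P W') ⊆ {a} := by
    apply lfp_le
    rintro x ⟨hx1, r, hr, hh, hp, hn⟩
    have hpos : ∀ b ∈ r.pos, b ∈ (WFM P).1 := by
      intro b hb
      rcases hp b hb with hb1 | hb1
      · exact hb1.1
      · rw [Set.mem_singleton_iff.mp hb1]; exact ha
    have hxT : x ∈ (WFM P).1 := hh ▸ closureT P hr hpos hn
    by_contra hxa
    exact hx1 ⟨hxT, hxa⟩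
  have hl : lfp (opTrue P W') ⊆ (WFM P).1 \ {a} := by
    have hnotin : a ∉ lfp (opTrue P W') := by
      intro haL
      have haL' : a ∈ opTrue P W' (lfp (opTrue P W')) := by rw [map_lfp]; exact haL
      obtain ⟨h1, r, hr, hh, hp, hn⟩ := haL'
      obtain ⟨c, hc, hcF⟩ := hno r hr hh fun b hb => by
        rcases hp b hb with hb1 | hb1
        · exact hb1.1
        · rw [Set.mem_singleton_iff.mp (hlsub hb1)]; exact ha
      exact hcF (hn c hc)
    intro x hx
    exact absurd (hlsub hx) (fun h => hnotin (h ▸ hx))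
  have hle := wfm_le P (pair_le P hl hg)
  exact (hle.1 ha).2 rfl

/-- Every rule with a false head has a false positive atom or a true negative atom. -/
lemma ruleF {a : α} (ha : a ∈ (WFM P).2) {r : GRule α} (hr : r ∈ P) (hh : r.head = a) :
    (∃ b ∈ r.pos, b ∈ (WFM P).2) ∨ ∃ c ∈ r.neg, c ∈ (WFM P).1 := by
  by_contra hno
  push_neg at hno
  obtain ⟨hposn, hnegn⟩ := hno
  set W' : Set α × Set α := ((WFM P).1, (WFM P).2 \ {a}) with hW'
  have hl : lfp (opTrue P W') ⊆ (WFM P).1 := by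
    intro x hx
    rcases lfpTrue_le P (show W' ≤ WFM P from ⟨le_rfl, Set.diff_subset⟩) hx with h | h
    · exact h
    · rw [lfp_wfm] at h; exact absurd h (Set.notMem_empty x)
  have hGsub : gfp (opFalse P W') ⊆ {a} := by
    have : gfp (opFalse P W') \ {a} = ∅ := by
      apply falseCoind
      rintro x ⟨hx1, hx2⟩
      have hx' : x ∈ opFalse P W' (gfp (opFalse P W')) := by rw [map_gfp]; exact hx1
      refine ⟨fun hxF => hx'.1 ⟨hxF, hx2⟩, fun r' hr' hh' => ?_⟩
      rcases hx'.2 r' hr' hh' with ⟨b, hb, hbm⟩ | hc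
      · refine Or.inl ⟨b, hb, ?_⟩
        rcases hbm with hb2 | hb2
        · exact Or.inl hb2.1
        · by_cases hba : b = a
          · exact Or.inl (hba ▸ ha)
          · exact Or.inr ⟨hb2, hba⟩
      · exact Or.inr hc
    intro x hx
    by_contra hxa
    exact absurd (Set.eq_empty_iff_forall_notMem.mp this x ⟨hx, hxa⟩) not_false
  have hg : gfp (opFalse P W') ⊆ (WFM P).2 \ {a} := by
    have hnotin : a ∉ gfp (opFalse P W') := by
      intro haG
      have haG' : a ∈ opFalse P W' (gfp (opFalse P W')) := by rw [map_gfp]; exact haG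
      rcases haG'.2 r hr hh with ⟨b, hb, hbm⟩ | ⟨c, hc1, hc2⟩
      · rcases hbm with hb2 | hb2
        · exact hposn b hb hb2.1
        · exact hposn b hb ((Set.mem_singleton_iff.mp (hGsub hb2)) ▸ ha)
      · exact hnegn c hc1 hc2
    intro x hx
    exact absurd (hGsub hx) fun h => hnotin (h ▸ hx)
  have hle := wfm_le P (pair_le P hl hg)
  exact (hle.2 ha).2 rfl

/-- `IFP` is monotone. -/
lemma ifp_mono {I J : Set α × Set α} (h : I ≤ J) : IFP P I ≤ IFP P J := by
  refine sup_le (le_trans h le_sup_left) (Prod.le_def.mpr ⟨?_, ?_⟩)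
  · exact fun x hx => (lfpTrue_le P h hx).elim (fun h1 => Or.inl h1) (fun h1 => Or.inr h1)
  · exact fun x hx => (gfpFalse_le P h hx).elim (fun h1 => Or.inl h1) (fun h1 => Or.inr h1)

lemma wfm_le_of_invariant {u : Set α × Set α} (hinv : ∀ I, I ≤ u → IFP P I ≤ u) :
    WFM P ≤ u := by
  let g : (Set α × Set α) →o (Set α × Set α) :=
    ⟨fun I => IFP P I ⊓ u, fun I J h => inf_le_inf (ifp_mono P h) le_rfl⟩
  have h2 : IFP P (lfp g) ⊓ u = lfp g := map_lfp g
  have hvu : lfp g ≤ u := le_trans (le_of_eq h2.symm) inf_le_right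
  have h1 : IFP P (lfp g) ≤ u := hinv _ hvu
  have hfix : IFP P (lfp g) ≤ lfp g := le_trans (le_inf le_rfl h1) (le_of_eq h2)
  exact le_trans (wfm_le P hfix) hvu

/-- Consistency of the well-founded model. -/
lemma wfm_consistent : ∀ a, ¬(a ∈ (WFM P).1 ∧ a ∈ (WFM P).2) := by
  set u : Set α × Set α := ((WFM P).1 \ (WFM P).2, (WFM P).2 \ (WFM P).1) with hu
  have hle : WFM P ≤ u := by
    apply wfm_le_of_invariant
    intro I hI
    refine sup_le hI (Prod.le_def.mpr ⟨?_, ?_⟩)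
    · -- lfp (opTrue P I) ⊆ (WFM P).1 \ (WFM P).2
      apply lfp_le
      rintro x ⟨hx1, r, hr, hh, hp, hn⟩
      have hpos : ∀ b ∈ r.pos, b ∈ (WFM P).1 \ (WFM P).2 := by
        intro b hb
        rcases hp b hb with hb1 | hb1
        · exact hI.1 hb1
        · exact hb1
      have hneg : ∀ c ∈ r.neg, c ∈ (WFM P).2 := fun c hc => (hI.2 (hn c hc)).1
      have hxT : x ∈ (WFM P).1 := hh ▸ closureT P hr (fun b hb => (hpos b hb).1) hneg
      refine ⟨hxT, fun hxF => ?_⟩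
      rcases ruleF P hxF hr hh with ⟨b, hb, hbF⟩ | ⟨c, hc, hcT⟩
      · exact (hpos b hb).2 hbF
      · exact (hI.2 (hn c hc)).2 hcT
    · -- gfp (opFalse P I) ⊆ (WFM P).2 \ (WFM P).1
      set G := gfp (opFalse P I) with hGdef
      have hmemG : ∀ x ∈ G, x ∉ I.2 ∧ ∀ r ∈ P, r.head = x →
          (∃ b ∈ r.pos, b ∈ I.2 ∪ G) ∨ ∃ c ∈ r.neg, c ∈ I.1 := by
        intro x hx
        have hx' : x ∈ opFalse P I G := by rw [hGdef, map_gfp]; exact hx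
        exact hx'
      -- G is disjoint from (WFM P).1
      have hGT : ∀ x, x ∈ G → x ∉ (WFM P).1 := by
        have hl' : lfp (opTrue P ((WFM P).1 \ G, (WFM P).2)) ⊆ (WFM P).1 \ G := by
          apply lfp_le
          rintro x ⟨hx1, r, hr, hh, hp, hn⟩
          have hpos : ∀ b ∈ r.pos, b ∈ (WFM P).1 \ G := by
            intro b hb
            rcases hp b hb with hb1 | hb1 <;> exact hb1
          have hxT : x ∈ (WFM P).1 := hh ▸ closureT P hr (fun b hb => (hpos b hb).1) hn
          refine ⟨hxT, fun hxG => ?_⟩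
          rcases (hmemG x hxG).2 r hr hh with ⟨b, hb, hbm⟩ | ⟨c, hc, hcI⟩
          · rcases hbm with hb2 | hb2
            · exact ((hI.2 hb2).2 (hpos b hb).1)
            · exact (hpos b hb).2 hb2
          · exact (hI.1 hcI).2 (hn c hc)
        have hg' : gfp (opFalse P ((WFM P).1 \ G, (WFM P).2)) ⊆ (WFM P).2 := by
          have : gfp (opFalse P ((WFM P).1 \ G, (WFM P).2)) = ∅ := by
            apply falseCoind
            intro x hx
            have hx' : x ∈ opFalse P ((WFM P).1 \ G, (WFM P).2)
                (gfp (opFalse P ((WFM P).1 \ G, (WFM P).2))) := by rw [map_gfp]; exact hx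
            refine ⟨hx'.1, fun r hr hh => ?_⟩
            rcases hx'.2 r hr hh with ⟨b, hb, hbm⟩ | ⟨c, hc1, hc2⟩
            · exact Or.inl ⟨b, hb, hbm⟩
            · exact Or.inr ⟨c, hc1, hc2.1⟩
          rw [this]; exact Set.empty_subset _
        have hle' := wfm_le P (pair_le P hl' hg')
        exact fun x hxG hxT => (hle'.1 hxT).2 hxG
      -- G ⊆ (WFM P).2
      have hGF : ∀ x ∈ G, x ∈ (WFM P).2 := by
        have : G \ (WFM P).2 = ∅ := by
          apply falseCoind
          rintro x ⟨hx1, hx2⟩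
          refine ⟨hx2, fun r hr hh => ?_⟩
          rcases (hmemG x hx1).2 r hr hh with ⟨b, hb, hbm⟩ | ⟨c, hc1, hc2⟩
          · refine Or.inl ⟨b, hb, ?_⟩
            rcases hbm with hb2 | hb2
            · exact Or.inl (hI.2 hb2).1
            · by_cases hbF : b ∈ (WFM P).2
              · exact Or.inl hbF
              · exact Or.inr ⟨hb2, hbF⟩
          · exact Or.inr ⟨c, hc1, (hI.1 hc2).1⟩
        intro x hx
        by_contra hxF
        exact absurd (Set.eq_empty_iff_forall_notMem.mp this x ⟨hx, hxF⟩) not_false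
      exact fun x hx => ⟨hGF x hx, hGT x hx⟩
  intro a ⟨h1, h2⟩
  exact (hle.1 h1).2 h2

end Aux

open ASP in
/-- For a finite ground normal program `P`, `AS(P) = AS(P^WF)`. -/
theorem AS_eq_AS_WFreduct {α : Type} (P : Set (GRule α)) (hP : P.Finite) :
    AS P = AS (WFreduct P) := by
  classical
  have dir1 : ∀ A : Set α, IsAnswerSet P A → IsAnswerSet (WFreduct P) A := by
    intro A hA
    -- (A, Aᶜ) is a prefixpoint of IFP P
    have hlA : OrderHom.lfp (opTrue P (A, Aᶜ)) ⊆ A := by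
      apply OrderHom.lfp_le
      rintro x ⟨hx1, r, hr, hh, hp, hn⟩
      exfalso
      refine hx1 ?_
      rw [← hh]
      refine hA.1 (r.head, r.pos) ⟨r, hr, fun c hc => hn c hc, rfl⟩ fun b hb => ?_
      rcases hp b hb with hb1 | hb1 <;> exact hb1
    have hgA : OrderHom.gfp (opFalse P (A, Aᶜ)) ⊆ Aᶜ := by
      intro x hx
      by_contra hxA
      rw [Set.notMem_compl_iff] at hxA
      set G := OrderHom.gfp (opFalse P (A, Aᶜ)) with hGdef
      have hmemG : ∀ y ∈ G, ∀ r ∈ P, r.head = y →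
          (∃ b ∈ r.pos, b ∈ Aᶜ ∪ G) ∨ ∃ c ∈ r.neg, c ∈ A := by
        intro y hy
        have hy' : y ∈ opFalse P (A, Aᶜ) G := by rw [hGdef, OrderHom.map_gfp]; exact hy
        exact hy'.2
      refine hA.2 (A \ G) ⟨Set.diff_subset, fun hsub => (hsub hxA).2 hx⟩ ?_
      rintro hb ⟨r, hr, hneg, rfl⟩ hbody
      have hhead : r.head ∈ A := hA.1 (r.head, r.pos) ⟨r, hr, hneg, rfl⟩
        fun b hb' => (hbody b hb').1
      refine ⟨hhead, fun hG => ?_⟩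
      rcases hmemG _ hG r hr rfl with ⟨b, hb', hbm⟩ | ⟨c, hc1, hc2⟩
      · rcases hbm with hb2 | hb2
        · exact hb2 (hbody b hb').1
        · exact (hbody b hb').2 hb2
      · exact hneg c hc1 hc2
    have hWA := wfm_le P (pair_le P hlA hgA)
    have hT : (WFM P).1 ⊆ A := hWA.1
    have hF : ∀ x ∈ (WFM P).2, x ∉ A := fun x hx => hWA.2 hx
    constructor
    · rintro hb ⟨r', hr', hneg', rfl⟩ hbody
      obtain ⟨r, hrP, hposF, hnegT, rfl⟩ := hr'
      refine hA.1 (r.head, r.pos) ⟨r, hrP, ?_, rfl⟩ ?_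
      · intro c hc
        by_cases hcF : c ∈ (WFM P).2
        · exact hF c hcF
        · exact hneg' c (Finset.mem_filter.mpr ⟨hc, hcF⟩)
      · intro b hb'
        by_cases hbT : b ∈ (WFM P).1
        · exact hT hbT
        · exact hbody b (Finset.mem_filter.mpr ⟨hb', hbT⟩)
    · intro B hBA hB
      refine hA.2 B hBA ?_
      rintro hb ⟨r, hrP, hnegA, rfl⟩ hbody
      have hposF : ∀ b ∈ r.pos, b ∉ (WFM P).2 :=
        fun b hb' hbF => hF b hbF (hBA.1 (hbody b hb'))
      have hnegT : ∀ c ∈ r.neg, c ∉ (WFM P).1 :=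
        fun c hc hcT => hnegA c hc (hT hcT)
      have hr' : (⟨r.head, r.pos.filter (fun b => b ∉ (WFM P).1),
          r.neg.filter (fun c => c ∉ (WFM P).2)⟩ : GRule α) ∈ WFreduct P :=
        ⟨r, hrP, hposF, hnegT, rfl⟩
      exact hB (r.head, r.pos.filter (fun b => b ∉ (WFM P).1))
        ⟨_, hr', fun c hc => hnegA c (Finset.mem_filter.mp hc).1, rfl⟩
        fun b hb' => hbody b (Finset.mem_filter.mp hb').1
  have dir2 : ∀ A : Set α, IsAnswerSet (WFreduct P) A → IsAnswerSet P A := by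
    intro A hA
    -- false atoms avoid A
    have hF : ∀ x ∈ (WFM P).2, x ∉ A := by
      intro x hxF hxA
      refine hA.2 (A \ (WFM P).2) ⟨Set.diff_subset, fun hsub => (hsub hxA).2 hxF⟩ ?_
      rintro hb ⟨r', hr', hneg', rfl⟩ hbody
      obtain ⟨r, hrP, hposF, hnegT, rfl⟩ := hr'
      have hhead : r.head ∈ A := hA.1 _ ⟨_, ⟨r, hrP, hposF, hnegT, rfl⟩, hneg', rfl⟩
        fun b hb' => (hbody b hb').1
      refine ⟨hhead, fun hhF => ?_⟩
      rcases ruleF P hhF hrP rfl with ⟨b, hb', hbF⟩ | ⟨c, hc, hcT⟩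
      · exact hposF b hb' hbF
      · exact hnegT c hc hcT
    -- true atoms are in A
    have hT : (WFM P).1 ⊆ A := by
      intro a ha
      obtain ⟨r, hrP, hh, hpos, hneg⟩ := factT P ha
      have hposF : ∀ b ∈ r.pos, b ∉ (WFM P).2 :=
        fun b hb hbF => wfm_consistent P b ⟨hpos b hb, hbF⟩
      have hnegT : ∀ c ∈ r.neg, c ∉ (WFM P).1 :=
        fun c hc hcT => wfm_consistent P c ⟨hcT, hneg c hc⟩
      have hr' : (⟨r.head, r.pos.filter (fun b => b ∉ (WFM P).1),
          r.neg.filter (fun c => c ∉ (WFM P).2)⟩ : GRule α) ∈ WFreduct P :=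
        ⟨r, hrP, hposF, hnegT, rfl⟩
      have hmem : (r.head, r.pos.filter (fun b => b ∉ (WFM P).1)) ∈
          glReduct (WFreduct P) A :=
        ⟨_, hr', fun c hc =>
          absurd (hneg c (Finset.mem_filter.mp hc).1) (Finset.mem_filter.mp hc).2, rfl⟩
      have := hA.1 _ hmem fun b hb =>
        absurd (hpos b (Finset.mem_filter.mp hb).1) (Finset.mem_filter.mp hb).2
      exact hh ▸ this
    -- the gfp of opFalse at (A, Aᶜ) is contained in Aᶜ
    have hgA : OrderHom.gfp (opFalse P (A, Aᶜ)) ⊆ Aᶜ := by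
      set G := OrderHom.gfp (opFalse P (A, Aᶜ)) with hGdef
      have hmemG : ∀ y ∈ G, ∀ r ∈ P, r.head = y →
          (∃ b ∈ r.pos, b ∈ Aᶜ ∪ G) ∨ ∃ c ∈ r.neg, c ∈ A := by
        intro y hy
        have hy' : y ∈ opFalse P (A, Aᶜ) G := by rw [hGdef, OrderHom.map_gfp]; exact hy
        exact hy'.2
      -- (WFM P).1 is disjoint from G
      have hTG : ∀ x ∈ (WFM P).1, x ∉ G := by
        have hl' : OrderHom.lfp (opTrue P ((WFM P).1 \ G, (WFM P).2)) ⊆ (WFM P).1 \ G := by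
          apply OrderHom.lfp_le
          rintro x ⟨hx1, r, hr, hh, hp, hn⟩
          have hpos : ∀ b ∈ r.pos, b ∈ (WFM P).1 \ G := by
            intro b hb
            rcases hp b hb with hb1 | hb1 <;> exact hb1
          have hxT : x ∈ (WFM P).1 := hh ▸ closureT P hr (fun b hb => (hpos b hb).1) hn
          refine ⟨hxT, fun hxG => ?_⟩
          rcases hmemG x hxG r hr hh with ⟨b, hb', hbm⟩ | ⟨c, hc1, hc2⟩
          · rcases hbm with hb2 | hb2
            · exact hb2 (hT (hpos b hb').1)
            · exact (hpos b hb').2 hb2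
          · exact hF c (hn c hc1) hc2
        have hg' : OrderHom.gfp (opFalse P ((WFM P).1 \ G, (WFM P).2)) ⊆ (WFM P).2 := by
          have : OrderHom.gfp (opFalse P ((WFM P).1 \ G, (WFM P).2)) = ∅ := by
            apply falseCoind
            intro x hx
            have hx' : x ∈ opFalse P ((WFM P).1 \ G, (WFM P).2)
                (OrderHom.gfp (opFalse P ((WFM P).1 \ G, (WFM P).2))) := by
              rw [OrderHom.map_gfp]; exact hx
            refine ⟨hx'.1, fun r hr hh => ?_⟩
            rcases hx'.2 r hr hh with ⟨b, hb, hbm⟩ | ⟨c, hc1, hc2⟩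
            · exact Or.inl ⟨b, hb, hbm⟩
            · exact Or.inr ⟨c, hc1, hc2.1⟩
          rw [this]; exact Set.empty_subset _
        have hle' := wfm_le P (pair_le P hl' hg')
        exact fun x hxT hxG => (hle'.1 hxT).2 hxG
      intro x hxG
      by_contra hxA
      rw [Set.notMem_compl_iff] at hxA
      refine hA.2 (A \ G) ⟨Set.diff_subset, fun hsub => (hsub hxA).2 hxG⟩ ?_
      rintro hb ⟨r', hr', hneg', rfl⟩ hbody
      obtain ⟨r, hrP, hposF, hnegT, rfl⟩ := hr'
      have hhead : r.head ∈ A := hA.1 _ ⟨_, ⟨r, hrP, hposF, hnegT, rfl⟩, hneg', rfl⟩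
        fun b hb' => (hbody b hb').1
      refine ⟨hhead, fun hhG => ?_⟩
      have hnegA : ∀ c ∈ r.neg, c ∉ A := by
        intro c hc
        by_cases hcF : c ∈ (WFM P).2
        · exact hF c hcF
        · exact hneg' c (Finset.mem_filter.mpr ⟨hc, hcF⟩)
      rcases hmemG _ hhG r hrP rfl with ⟨b, hb', hbm⟩ | ⟨c, hc1, hc2⟩
      · by_cases hbT : b ∈ (WFM P).1
        · rcases hbm with hb2 | hb2
          · exact hb2 (hT hbT)
          · exact hTG b hbT hb2
        · have hbB : b ∈ A \ G := hbody b (Finset.mem_filter.mpr ⟨hb', hbT⟩)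
          rcases hbm with hb2 | hb2
          · exact hb2 hbB.1
          · exact hbB.2 hb2
      · exact hnegA c hc1 hc2
    constructor
    · rintro hb ⟨r, hrP, hnegA, rfl⟩ hbody
      have hposF : ∀ b ∈ r.pos, b ∉ (WFM P).2 :=
        fun b hb' hbF => hF b hbF (hbody b hb')
      have hnegT : ∀ c ∈ r.neg, c ∉ (WFM P).1 :=
        fun c hc hcT => hnegA c hc (hT hcT)
      exact hA.1 (r.head, r.pos.filter (fun b => b ∉ (WFM P).1))
        ⟨_, ⟨r, hrP, hposF, hnegT, rfl⟩, fun c hc => hnegA c (Finset.mem_filter.mp hc).1, rfl⟩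
        fun b hb' => hbody b (Finset.mem_filter.mp hb').1
    · intro B hBA hB
      -- (B, Aᶜ) is a prefixpoint, hence (WFM P).1 ⊆ B
      have hlB : OrderHom.lfp (opTrue P (B, Aᶜ)) ⊆ B := by
        apply OrderHom.lfp_le
        rintro x ⟨hx1, r, hr, hh, hp, hn⟩
        exfalso
        refine hx1 ?_
        rw [← hh]
        refine hB (r.head, r.pos) ⟨r, hr, fun c hc => hn c hc, rfl⟩ fun b hb' => ?_
        rcases hp b hb' with hb1 | hb1 <;> exact hb1
      have hgB : OrderHom.gfp (opFalse P (B, Aᶜ)) ⊆ Aᶜ := by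
        intro x hx
        rcases gfpFalse_le P (show ((B, Aᶜ) : Set α × Set α) ≤ (A, Aᶜ) from
          ⟨hBA.1, le_rfl⟩) hx with h | h
        · exact h
        · exact hgA h
      have hTB : (WFM P).1 ⊆ B := (wfm_le P (pair_le P hlB hgB)).1
      refine hA.2 B hBA ?_
      rintro hb ⟨r', hr', hneg', rfl⟩ hbody
      obtain ⟨r, hrP, hposF, hnegT, rfl⟩ := hr'
      refine hB (r.head, r.pos) ⟨r, hrP, ?_, rfl⟩ ?_
      · intro c hc
        by_cases hcF : c ∈ (WFM P).2
        · exact hF c hcF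
        · exact hneg' c (Finset.mem_filter.mpr ⟨hc, hcF⟩)
      · intro b hb'
        by_cases hbT : b ∈ (WFM P).1
        · exact hTB hbT
        · exact hbody b (Finset.mem_filter.mpr ⟨hb', hbT⟩)
  ext A
  exact ⟨fun h => dir1 A h, fun h => dir2 A h⟩
end

section
/- Let P be a finite ground normal program. Every answer set of P is an answer set of its WF reduct P^WF. -/
open scoped Classical

open ASP in
/-- Every answer set of a finite ground normal program `P` is an answer set
of its WF reduct `P^WF`. -/
theorem AS_subset_AS_WFreduct {α : Type} (P : Set (GRule α)) (hP : P.Finite) :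
    ∀ A ∈ AS P, A ∈ AS (WFreduct P) := by

  intro A hA
  obtain ⟨hmod, hmin⟩ := hA
  -- Step 1: WFM P ≤ (A, Aᶜ)
  have hwfm : WFM P ≤ (A, Aᶜ) := by
    apply sInf_le
    show IFP P (A, Aᶜ) ≤ (A, Aᶜ)
    rw [IFP]
    refine sup_le le_rfl (Prod.mk_le_mk.mpr ⟨?_, ?_⟩)
    · -- lfp (opTrue) ⊆ A
      apply OrderHom.lfp_le
      intro a ha
      obtain ⟨haA, r, hr, hh, hp, hn⟩ := ha
      exfalso
      apply haA
      have hhead : r.head ∈ A := by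
        apply hmod (r.head, r.pos) ⟨r, hr, fun c hc => hn c hc, rfl⟩
        intro b hb
        simpa using hp b hb
      exact hh ▸ hhead
    · -- gfp (opFalse) ⊆ Aᶜ
      set F := OrderHom.gfp (opFalse P (A, Aᶜ)) with hFdef
      have hF : opFalse P (A, Aᶜ) F = F := OrderHom.map_gfp _
      have hFA : F ⊆ A := by
        rw [← hF]
        intro a ha
        have := ha.1
        simpa using this
      have hmodel : IsModelPos (glReduct P A) (A \ F) := by
        rintro hb ⟨r, hr, hneg, rfl⟩ hsub
        have hhead : r.head ∈ A := hmod (r.head, r.pos) ⟨r, hr, hneg, rfl⟩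
          (fun b hb => (hsub b hb).1)
        refine ⟨hhead, fun hF' => ?_⟩
        rw [← hF] at hF'
        obtain ⟨-, hall⟩ := hF'
        rcases hall r hr rfl with ⟨b, hb, hbm⟩ | ⟨c, hc, hcm⟩
        · rcases hbm with h1 | h2
          · exact h1 (hsub b hb).1
          · exact (hsub b hb).2 h2
        · exact hneg c hc hcm
      have hFempty : F = ∅ := by
        by_contra hne
        obtain ⟨x, hx⟩ := Set.nonempty_iff_ne_empty.mpr hne
        have hss : A \ F ⊂ A :=
          (Set.ssubset_iff_of_subset Set.diff_subset).2 ⟨x, hFA hx, fun h => h.2 hx⟩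
        exact hmin (A \ F) hss hmodel
      rw [hFempty]
      exact Set.empty_subset _
  have hT : (WFM P).1 ⊆ A := hwfm.1
  have hFc : (WFM P).2 ⊆ Aᶜ := hwfm.2
  constructor
  · -- A is a model of glReduct (WFreduct P) A
    rintro hb ⟨r', ⟨r, hr, hposF, hnegT, rfl⟩, hneg', rfl⟩ hsub
    simp only at *
    have hnegA : ∀ c ∈ r.neg, c ∉ A := by
      intro c hc hcA
      by_cases hcF : c ∈ (WFM P).2
      · exact hFc hcF hcA
      · exact hneg' c (Finset.mem_filter.mpr ⟨hc, hcF⟩) hcA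
    have hposA : ∀ b ∈ r.pos, b ∈ A := by
      intro b hb
      by_cases hbT : b ∈ (WFM P).1
      · exact hT hbT
      · exact hsub b (Finset.mem_filter.mpr ⟨hb, hbT⟩)
    exact hmod (r.head, r.pos) ⟨r, hr, hnegA, rfl⟩ hposA
  · -- minimality
    intro B hBA hBmod
    apply hmin B hBA
    rintro hb ⟨r, hr, hneg, rfl⟩ hsub
    simp only at *
    have hBsubA : B ⊆ A := hBA.subset
    have hposF : ∀ b ∈ r.pos, b ∉ (WFM P).2 :=
      fun b hb hbF => hFc hbF (hBsubA (hsub b hb))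
    have hnegT : ∀ c ∈ r.neg, c ∉ (WFM P).1 :=
      fun c hc hcT => hneg c hc (hT hcT)
    have hr' : (⟨r.head, r.pos.filter (fun b => b ∉ (WFM P).1),
        r.neg.filter (fun c => c ∉ (WFM P).2)⟩ : GRule α) ∈ WFreduct P :=
      ⟨r, hr, hposF, hnegT, rfl⟩
    have hin : ((r.head, r.pos.filter (fun b => b ∉ (WFM P).1)) : α × Finset α) ∈
        glReduct (WFreduct P) A := by
      refine ⟨_, hr', ?_, rfl⟩
      intro c hc
      exact hneg c (Finset.mem_filter.mp hc).1
    exact hBmod _ hin (fun b hb => hsub b (Finset.mem_filter.mp hb).1)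
end

section
/- Let P be a finite ground normal program and let R ⊆ P be a relevance-closed subprogram of P with atom set B_R. Then for every answer set A of P, the projection A ∩ B_R is an answer set of R; consequently AS_{B_R}(P) ⊆ AS(R). -/
open scoped Classical

open ASP in
/-- If `R ⊆ P` is a relevance-closed subprogram of the finite ground normal
program `P`, then for every answer set `A` of `P` the projection `A ∩ B_R` is an answer
set of `R`; consequently `AS_{B_R}(P) ⊆ AS(R)`. -/
theorem projected_answerSets_subset {α : Type} (P R : Set (GRule α)) (hP : P.Finite)
    (hR : RelevanceClosed P R) :
    (∀ A ∈ AS P, A ∩ atomsOf R ∈ AS R) ∧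
      {B | ∃ A ∈ AS P, B = A ∩ atomsOf R} ⊆ AS R := by
  have main : ∀ A ∈ AS P, A ∩ atomsOf R ∈ AS R := by
    intro A hA
    obtain ⟨hAmod, hAmin⟩ := hA
    have hredeq : glReduct R (A ∩ atomsOf R) = glReduct R A := by
      ext hb
      constructor <;> rintro ⟨r, hr, hneg, rfl⟩
      · exact ⟨r, hr, fun c hc hcA => hneg c hc ⟨hcA, ⟨r, hr, Or.inr (Or.inr hc)⟩⟩, rfl⟩
      · exact ⟨r, hr, fun c hc hcA => hneg c hc hcA.1, rfl⟩
    constructor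
    · rw [hredeq]
      rintro hb ⟨r, hr, hneg, rfl⟩ hbody
      refine ⟨hAmod (r.head, r.pos) ⟨r, hR.1 hr, hneg, rfl⟩
        (fun b hb => (hbody b hb).1), ⟨r, hr, Or.inl rfl⟩⟩
    · intro B hB hBmod
      rw [hredeq] at hBmod
      set C : Set α := B ∪ (A \ atomsOf R) with hC
      have hBsub : B ⊆ A ∩ atomsOf R := hB.subset
      have hCA : C ⊆ A := by
        rintro x (hx | hx)
        · exact (hBsub hx).1
        · exact hx.1
      have hCss : C ⊂ A := by
        obtain ⟨x, hxA, hxB⟩ := Set.exists_of_ssubset hB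
        refine ⟨hCA, fun hsup => ?_⟩
        rcases hsup hxA.1 with hx | hx
        · exact hxB hx
        · exact hx.2 hxA.2
      refine hAmin C hCss ?_
      rintro hb ⟨r, hrP, hneg, rfl⟩ hbody
      by_cases hhead : r.head ∈ atomsOf R
      · have hrR : r ∈ R := hR.2 r hrP hhead
        have hposB : ∀ b ∈ r.pos, b ∈ B := by
          intro b hbm
          rcases hbody b hbm with hx | hx
          · exact hx
          · exact absurd ⟨r, hrR, Or.inr (Or.inl hbm)⟩ hx.2
        exact Or.inl (hBmod (r.head, r.pos) ⟨r, hrR, hneg, rfl⟩ hposB)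
      · exact Or.inr ⟨hAmod (r.head, r.pos) ⟨r, hrP, hneg, rfl⟩
          (fun b hbm => hCA (hbody b hbm)), hhead⟩
  exact ⟨main, by rintro B ⟨A, hA, rfl⟩; exact main A hA⟩
end

section
/- Let P be a finite ground normal program that is OLON-free, and let R ⊆ P be a relevance-closed subprogram of P with atom set B_R. Then the answer sets of P projected onto B_R coincide with the answer sets of R: AS_{B_R}(P) = AS(R). -/
open scoped Classical

/-!
Splitting (Lifschitz–Turner): if every rule headed in `V` has its body in `V`, the answer sets
of `P` are exactly the sets `B ∪ C` with `B` an answer set of the rules headed in `V` and `C` an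
answer set of the remaining rules partially evaluated at `B`. Relevance-closedness says that
`B_R` splits `P` with bottom part `R`, so projection gives `AS_{B_R}(P) ⊆ AS(R)`; conversely
every `B ∈ AS(R)` extends, because the evaluated top part is again finite and OLON-free.

Finite OLON-free programs have answer sets: an atom `x` with inclusion-minimal reach set spans a
strongly connected bottom part, on which OLON-freeness makes "reached from `x` by an odd walk" a
colouring that positive edges preserve and negative edges flip. Such a signed program has an
answer set by a Knaster–Tarski argument, and the evaluated top part has fewer atoms.
-/

namespace ASP

variable {α : Type}

section PositivePrograms

variable {Q Q' : Set (α × Finset α)} {J W : Set α}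

def leastModel (Q : Set (α × Finset α)) : Set α := ⋂₀ {J | IsModelPos Q J}

lemma leastModel_subset (hJ : IsModelPos Q J) : leastModel Q ⊆ J :=
  Set.sInter_subset_of_mem hJ

lemma isModelPos_leastModel (Q : Set (α × Finset α)) : IsModelPos Q (leastModel Q) :=
  fun hb hmem hbody => Set.mem_sInter.mpr fun J hJ =>
    hJ hb hmem fun b hb' => Set.mem_sInter.mp (hbody b hb') J hJ

lemma leastModel_mono (h : Q ⊆ Q') : leastModel Q ⊆ leastModel Q' :=
  leastModel_subset fun hb hmem => isModelPos_leastModel Q' hb (h hmem)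

lemma leastModel_subset_of_heads (h : ∀ hb ∈ Q, hb.1 ∈ W) : leastModel Q ⊆ W :=
  leastModel_subset fun hb hmem _ => h hb hmem

def IsPosSplittingSet (Q : Set (α × Finset α)) (W : Set α) : Prop :=
  ∀ hb ∈ Q, hb.1 ∈ W → ∀ b ∈ hb.2, b ∈ W

def partialEval (Q : Set (α × Finset α)) (W B : Set α) : Set (α × Finset α) :=
  {hb' | ∃ hb ∈ Q, hb.1 ∉ W ∧ (∀ b ∈ hb.2, b ∈ W → b ∈ B) ∧
    hb' = (hb.1, hb.2.filter (· ∉ W))}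

lemma leastModel_inter_of_isPosSplittingSet (hW : IsPosSplittingSet Q W) :
    leastModel Q ∩ W = leastModel {hb ∈ Q | hb.1 ∈ W} := by
  apply subset_antisymm
  · suffices hmod : IsModelPos Q (leastModel {hb ∈ Q | hb.1 ∈ W} ∪ Wᶜ) by
      rintro a ⟨ha, haW⟩
      exact (leastModel_subset hmod ha).resolve_right (not_not.mpr haW)
    intro hb hmem hbody
    by_cases hh : hb.1 ∈ W
    · refine Or.inl (isModelPos_leastModel _ hb ⟨hmem, hh⟩ fun b hb' => ?_)
      exact (hbody b hb').resolve_right (not_not.mpr (hW hb hmem hh b hb'))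
    · exact Or.inr hh
  · exact Set.subset_inter (leastModel_mono (Set.sep_subset Q _))
      (leastModel_subset_of_heads fun _ hmem => hmem.2)

lemma leastModel_diff_of_isPosSplittingSet (hW : IsPosSplittingSet Q W) :
    leastModel Q \ W = leastModel (partialEval Q W (leastModel Q ∩ W)) := by
  set L := leastModel Q
  have htop : leastModel (partialEval Q W (L ∩ W)) ⊆ Wᶜ := by
    refine leastModel_subset_of_heads ?_
    rintro _ ⟨hb, -, hh, -, rfl⟩
    exact hh
  apply subset_antisymm
  · suffices hmod : IsModelPos Q (L ∩ W ∪ leastModel (partialEval Q W (L ∩ W))) by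
      rintro a ⟨ha, haW⟩
      exact (leastModel_subset hmod ha).resolve_left fun h => haW h.2
    intro hb hmem hbody
    have hinW : ∀ b ∈ hb.2, b ∈ W → b ∈ L ∩ W := fun b hb' hbW =>
      (hbody b hb').resolve_right fun h => htop h hbW
    by_cases hh : hb.1 ∈ W
    · refine Or.inl ⟨isModelPos_leastModel Q hb hmem fun b hb' => ?_, hh⟩
      exact (hinW b hb' (hW hb hmem hh b hb')).1
    · refine Or.inr (isModelPos_leastModel _ (hb.1, hb.2.filter (· ∉ W))
        ⟨hb, hmem, hh, hinW, rfl⟩ fun b hb' => ?_)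
      obtain ⟨hb', hbW⟩ := Finset.mem_filter.mp hb'
      exact (hbody b hb').resolve_left fun h => hbW h.2
  · refine leastModel_subset ?_
    rintro _ ⟨hb, hmem, hh, hinW, rfl⟩ hbody
    refine ⟨isModelPos_leastModel Q hb hmem fun b hb' => ?_, hh⟩
    by_cases hbW : b ∈ W
    · exact (hinW b hb' hbW).1
    · exact (hbody b (Finset.mem_filter.mpr ⟨hb', hbW⟩)).1

end PositivePrograms

section Reducts

variable {P : Set (GRule α)} {A I I' V W : Set α}

lemma glReduct_mono_right (h : I ⊆ I') : glReduct P I' ⊆ glReduct P I := by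
  rintro _ ⟨r, hr, hn, rfl⟩
  exact ⟨r, hr, fun c hc hcI => hn c hc (h hcI), rfl⟩

lemma glReduct_congr (h : ∀ r ∈ P, ∀ c ∈ r.neg, c ∈ I ↔ c ∈ I') :
    glReduct P I = glReduct P I' := by
  ext hb
  constructor
  · rintro ⟨r, hr, hn, rfl⟩
    exact ⟨r, hr, fun c hc hcI => hn c hc ((h r hr c hc).mpr hcI), rfl⟩
  · rintro ⟨r, hr, hn, rfl⟩
    exact ⟨r, hr, fun c hc hcI => hn c hc ((h r hr c hc).mp hcI), rfl⟩

lemma sep_glReduct : {hb ∈ glReduct P I | hb.1 ∈ W} = glReduct {r ∈ P | r.head ∈ W} I := by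
  ext hb
  constructor
  · rintro ⟨⟨r, hr, hn, rfl⟩, hh⟩
    exact ⟨r, ⟨hr, hh⟩, hn, rfl⟩
  · rintro ⟨r, ⟨hr, hh⟩, hn, rfl⟩
    exact ⟨⟨r, hr, hn, rfl⟩, hh⟩

lemma leastModel_glReduct_inter (hW : IsPosSplittingSet (glReduct P I) W) :
    leastModel (glReduct P I) ∩ W = leastModel (glReduct {r ∈ P | r.head ∈ W} I) := by
  rw [leastModel_inter_of_isPosSplittingSet hW, sep_glReduct]

lemma isAnswerSet_iff : IsAnswerSet P A ↔ leastModel (glReduct P A) = A := by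
  constructor
  · rintro ⟨hm, hmin⟩
    by_contra hne
    exact hmin _ ((leastModel_subset hm).ssubset_of_ne hne) (isModelPos_leastModel _)
  · intro h
    refine ⟨by simpa only [h] using isModelPos_leastModel (glReduct P A),
      fun B hB hBmod => hB.not_subset ?_⟩
    simpa only [h] using leastModel_subset hBmod

lemma IsAnswerSet.subset_of_heads (hA : IsAnswerSet P A) (h : ∀ r ∈ P, r.head ∈ W) :
    A ⊆ W := by
  rw [← isAnswerSet_iff.mp hA]
  refine leastModel_subset_of_heads ?_
  rintro _ ⟨r, hr, -, rfl⟩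
  exact h r hr

end Reducts

section Splitting

def IsSplittingSet (P : Set (GRule α)) (V : Set α) : Prop :=
  ∀ r ∈ P, r.head ∈ V → (∀ b ∈ r.pos, b ∈ V) ∧ ∀ c ∈ r.neg, c ∈ V

/-- The rules of `P` headed outside `V`, partially evaluated with respect to an answer set `B`
of the rules headed in `V`. -/
def evalTop (P : Set (GRule α)) (V B : Set α) : Set (GRule α) :=
  {r' | ∃ r ∈ P, r.head ∉ V ∧ (∀ b ∈ r.pos, b ∈ V → b ∈ B) ∧
    (∀ c ∈ r.neg, c ∈ V → c ∉ B) ∧ r' = ⟨r.head, r.pos.filter (· ∉ V), r.neg.filter (· ∉ V)⟩}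

variable {P : Set (GRule α)} {A B C V : Set α}

lemma IsSplittingSet.isPosSplittingSet_glReduct (hV : IsSplittingSet P V) (I : Set α) :
    IsPosSplittingSet (glReduct P I) V := by
  rintro _ ⟨r, hr, -, rfl⟩ hh
  exact (hV r hr hh).1

lemma IsSplittingSet.glReduct_bottom_inter (hV : IsSplittingSet P V) (I : Set α) :
    glReduct {r ∈ P | r.head ∈ V} (I ∩ V) = glReduct {r ∈ P | r.head ∈ V} I :=
  glReduct_congr fun r hr c hc => and_iff_left ((hV r hr.1 hr.2).2 c hc)

lemma IsAnswerSet.subset_compl_of_evalTop (hC : IsAnswerSet (evalTop P V B) C) : C ⊆ Vᶜ := by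
  refine hC.subset_of_heads ?_
  rintro _ ⟨r, -, hh, -, -, rfl⟩
  exact hh

lemma IsAnswerSet.subset_of_sep_head_mem (hB : IsAnswerSet {r ∈ P | r.head ∈ V} B) : B ⊆ V :=
  hB.subset_of_heads fun _ hr => hr.2

lemma union_inter_eq_of_subset_compl (hB : B ⊆ V) (hC : C ⊆ Vᶜ) : (B ∪ C) ∩ V = B := by
  rw [Set.union_inter_distrib_right, Set.inter_eq_left.mpr hB,
    (Set.subset_compl_iff_disjoint_right.mp hC).inter_eq, Set.union_empty]

lemma glReduct_evalTop (hB : B ⊆ V) (hC : C ⊆ Vᶜ) :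
    glReduct (evalTop P V B) C = partialEval (glReduct P (B ∪ C)) V B := by
  ext hb
  constructor
  · rintro ⟨_, ⟨r, hr, hh, hpos, hneg, rfl⟩, hnC, rfl⟩
    refine ⟨_, ⟨r, hr, fun c hc => ?_, rfl⟩, hh, hpos, rfl⟩
    rintro (hcB | hcC)
    · exact hneg c hc (hB hcB) hcB
    · exact hnC c (Finset.mem_filter.mpr ⟨hc, hC hcC⟩) hcC
  · rintro ⟨_, ⟨r, hr, hn, rfl⟩, hh, hpos, rfl⟩
    refine ⟨_, ⟨r, hr, hh, hpos, fun c hc _ hcB => hn c hc (Or.inl hcB), rfl⟩, ?_, rfl⟩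
    exact fun c hc hcC => hn c (Finset.mem_filter.mp hc).1 (Or.inr hcC)

lemma IsSplittingSet.isAnswerSet_inter (hV : IsSplittingSet P V) (hA : IsAnswerSet P A) :
    IsAnswerSet {r ∈ P | r.head ∈ V} (A ∩ V) := by
  rw [isAnswerSet_iff] at hA ⊢
  rw [hV.glReduct_bottom_inter,
    ← leastModel_glReduct_inter (hV.isPosSplittingSet_glReduct A), hA]

lemma IsSplittingSet.isAnswerSet_union (hV : IsSplittingSet P V)
    (hB : IsAnswerSet {r ∈ P | r.head ∈ V} B) (hC : IsAnswerSet (evalTop P V B) C) :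
    IsAnswerSet P (B ∪ C) := by
  have hBV : B ⊆ V := hB.subset_of_sep_head_mem
  have hCV : C ⊆ Vᶜ := hC.subset_compl_of_evalTop
  rw [isAnswerSet_iff] at hB hC ⊢
  have hbot : leastModel (glReduct P (B ∪ C)) ∩ V = B := by
    rw [leastModel_glReduct_inter (hV.isPosSplittingSet_glReduct _),
      ← hV.glReduct_bottom_inter, union_inter_eq_of_subset_compl hBV hCV, hB]
  have htop : leastModel (glReduct P (B ∪ C)) \ V = C := by
    rw [leastModel_diff_of_isPosSplittingSet (hV.isPosSplittingSet_glReduct _), hbot,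
      ← glReduct_evalTop hBV hCV, hC]
  rw [← Set.inter_union_sdiff (leastModel (glReduct P (B ∪ C))) V, hbot, htop]

lemma RelevanceClosed.isSplittingSet {R : Set (GRule α)} (hR : RelevanceClosed P R) :
    IsSplittingSet P (atomsOf R) := fun r hr hh =>
  ⟨fun _ hb => ⟨r, hR.2 r hr hh, Or.inr (Or.inl hb)⟩,
    fun _ hc => ⟨r, hR.2 r hr hh, Or.inr (Or.inr hc)⟩⟩

lemma RelevanceClosed.sep_head_mem_atomsOf {R : Set (GRule α)} (hR : RelevanceClosed P R) :
    {r ∈ P | r.head ∈ atomsOf R} = R :=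
  Set.ext fun r => ⟨fun hr => hR.2 r hr.1 hr.2, fun hr => ⟨hR.1 hr, r, hr, Or.inl rfl⟩⟩

end Splitting

section Signing

def IsSigning (P : Set (GRule α)) (σ : α → Bool) : Prop :=
  ∀ ⦃x y : α⦄ ⦃s : Bool⦄, Edge P x y s → σ y = xor (σ x) s

variable {P : Set (GRule α)} {σ : α → Bool} {r : GRule α}

lemma IsSigning.pos (hσ : IsSigning P σ) (hr : r ∈ P) {b : α} (hb : b ∈ r.pos) :
    σ b = σ r.head := by
  simpa using hσ ⟨r, hr, rfl, Or.inl ⟨rfl, hb⟩⟩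

lemma IsSigning.neg (hσ : IsSigning P σ) (hr : r ∈ P) {c : α} (hc : c ∈ r.neg) :
    σ c = !σ r.head := by
  simpa using hσ ⟨r, hr, rfl, Or.inr ⟨rfl, hc⟩⟩

/-- Once the atoms of one colour are fixed, the rules headed in the other colour form a positive
program over that colour, so an answer set is a fixpoint of the composite of the two antitone
least-model operators. -/
theorem IsSigning.exists_answerSet (hσ : IsSigning P σ) : ∃ A, IsAnswerSet P A := by
  let Pc (c : Bool) : Set (GRule α) := {r ∈ P | r.head ∈ σ ⁻¹' {c}}
  let Φ : Set α →o Set α :=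
    ⟨fun U => leastModel (glReduct (Pc true) (leastModel (glReduct (Pc false) U))),
      fun _ _ hU => leastModel_mono (glReduct_mono_right
        (leastModel_mono (glReduct_mono_right hU)))⟩
  let K (c : Bool) : Set α :=
    cond c (OrderHom.lfp Φ) (leastModel (glReduct (Pc false) (OrderHom.lfp Φ)))
  have hK : ∀ c, leastModel (glReduct (Pc c) (K !c)) = K c := by
    rintro (_ | _)
    · rfl
    · exact Φ.map_lfp
  set A : Set α := {a | a ∈ K (σ a)}
  have hcolour : ∀ c, leastModel (glReduct P A) ∩ σ ⁻¹' {c} = K c := fun c => by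
    have hsplit : IsPosSplittingSet (glReduct P A) (σ ⁻¹' {c}) := by
      rintro _ ⟨r, hr, -, rfl⟩ hh b hb
      exact (hσ.pos hr hb).trans hh
    rw [leastModel_glReduct_inter hsplit, ← hK c]
    congr 1
    refine glReduct_congr fun r hr a ha => ?_
    have hσa : σ a = !c := by rw [hσ.neg hr.1 ha, show σ r.head = c from hr.2]
    simp only [A, Set.mem_ofPred_eq, hσa]
  refine ⟨A, isAnswerSet_iff.mpr (Set.ext fun a => ?_)⟩
  change _ ↔ a ∈ K (σ a)
  rw [← hcolour (σ a)]
  simp only [Set.mem_inter_iff, Set.mem_preimage, Set.mem_singleton_iff, and_true]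

end Signing

section Reachability

variable {P : Set (GRule α)} {x y z : α} {s t : Bool}

lemma Reaches.trans (h₁ : Reaches P x y s) (h₂ : Reaches P y z t) :
    Reaches P x z (xor s t) := by
  induction h₁ with
  | single e => exact .step e h₂
  | step e _ ih => simpa [Bool.xor_assoc] using Reaches.step e (ih h₂)

lemma Reaches.mono {P' : Set (GRule α)}
    (h : ∀ {x y : α} {s : Bool}, Edge P x y s → Edge P' x y s) (hr : Reaches P x y s) :
    Reaches P' x y s := by
  induction hr with
  | single e => exact .single (h e)
  | step e _ ih => exact .step (h e) ih

lemma Reaches.mem_atomsOf (h : Reaches P x y s) : y ∈ atomsOf P := by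
  induction h with
  | single e =>
    obtain ⟨r, hr, -, ⟨-, hy⟩ | ⟨-, hy⟩⟩ := e
    exacts [⟨r, hr, Or.inr (Or.inl hy)⟩, ⟨r, hr, Or.inr (Or.inr hy)⟩]
  | step _ _ ih => exact ih

def reachSet (P : Set (GRule α)) (x : α) : Set α := insert x {y | ∃ s, Reaches P x y s}

lemma isSplittingSet_reachSet : IsSplittingSet P (reachSet P x) := by
  intro r hr hh
  have hreach : ∀ {b : α} {s : Bool}, Edge P r.head b s → b ∈ reachSet P x := by
    intro b s e
    rcases hh with hh | ⟨t, ht⟩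
    · exact Or.inr ⟨s, by rw [← hh]; exact .single e⟩
    · exact Or.inr ⟨_, ht.trans (.single e)⟩
  exact ⟨fun b hb => hreach ⟨r, hr, rfl, Or.inl ⟨rfl, hb⟩⟩,
    fun c hc => hreach ⟨r, hr, rfl, Or.inr ⟨rfl, hc⟩⟩⟩

lemma reachSet_subset_of_mem (hy : y ∈ reachSet P x) : reachSet P y ⊆ reachSet P x := by
  rcases hy with rfl | ⟨s, hs⟩
  · exact le_rfl
  · rintro z (rfl | ⟨t, ht⟩)
    exacts [Or.inr ⟨s, hs⟩, Or.inr ⟨_, hs.trans ht⟩]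

lemma exists_forall_mem_reachSet_mem_reachSet (hfin : (atomsOf P).Finite)
    (hne : (atomsOf P).Nonempty) :
    ∃ x ∈ atomsOf P, ∀ y ∈ reachSet P x, x ∈ reachSet P y := by
  obtain ⟨x, hx, hmin⟩ := hfin.exists_minimalFor (reachSet P) _ hne
  refine ⟨x, hx, fun y hy => hmin ?_ (reachSet_subset_of_mem hy) (Set.mem_insert x _)⟩
  rcases hy with rfl | ⟨s, hs⟩
  exacts [hx, hs.mem_atomsOf]

/-- If `z` reaches back to `x`, two walks from `x` to `z` of different parities would close
an odd loop through `x`. -/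
lemma OLONFree.decide_reaches_eq (holon : OLONFree P) (hback : x ∈ reachSet P z)
    (h : Reaches P x z s) : decide (Reaches P x z true) = s := by
  cases s
  · refine decide_eq_false fun hodd => ?_
    rcases hback with rfl | ⟨u, hu⟩
    · exact holon _ hodd
    · cases u
      exacts [holon x (by simpa using hodd.trans hu), holon x (by simpa using h.trans hu)]
  · exact decide_eq_true h

lemma OLONFree.isSigning_reachSet (holon : OLONFree P)
    (hscc : ∀ y ∈ reachSet P x, x ∈ reachSet P y) :
    IsSigning {r ∈ P | r.head ∈ reachSet P x} (fun y => decide (Reaches P x y true)) := by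
  rintro _ z s ⟨r, ⟨hr, hh⟩, rfl, hz⟩
  have e : Edge P r.head z s := ⟨r, hr, rfl, hz⟩
  have hzV : z ∈ reachSet P x := by
    rcases hz with ⟨rfl, hz⟩ | ⟨rfl, hz⟩
    exacts [(isSplittingSet_reachSet r hr hh).1 z hz, (isSplittingSet_reachSet r hr hh).2 z hz]
  dsimp only
  rcases hh with hh | ⟨p, hp⟩
  · rw [hh, decide_eq_false (holon x), Bool.false_xor]
    exact holon.decide_reaches_eq (hscc z hzV) (hh ▸ .single e)
  · rw [holon.decide_reaches_eq (hscc _ (Or.inr ⟨p, hp⟩)) hp]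
    exact holon.decide_reaches_eq (hscc z hzV) (hp.trans (.single e))

end Reachability

section Existence

variable {P : Set (GRule α)} {V B : Set α}

lemma atomsOf_finite (hP : P.Finite) : (atomsOf P).Finite := by
  refine (hP.biUnion fun r _ => ((Set.finite_singleton r.head).union
    (r.pos.finite_toSet.union r.neg.finite_toSet))).subset ?_
  rintro a ⟨r, hr, ha⟩
  exact Set.mem_biUnion hr ha

lemma evalTop_finite (hP : P.Finite) : (evalTop P V B).Finite := by
  refine (hP.image fun r : GRule α =>
    (⟨r.head, r.pos.filter (· ∉ V), r.neg.filter (· ∉ V)⟩ : GRule α)).subset ?_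
  rintro _ ⟨r, hr, -, -, -, rfl⟩
  exact ⟨r, hr, rfl⟩

lemma Edge.of_evalTop {x y : α} {s : Bool} (h : Edge (evalTop P V B) x y s) : Edge P x y s := by
  obtain ⟨_, ⟨r, hr, -, -, -, rfl⟩, hh, ⟨hs, hy⟩ | ⟨hs, hy⟩⟩ := h
  exacts [⟨r, hr, hh, Or.inl ⟨hs, (Finset.mem_filter.mp hy).1⟩⟩,
    ⟨r, hr, hh, Or.inr ⟨hs, (Finset.mem_filter.mp hy).1⟩⟩]

lemma olonFree_evalTop (holon : OLONFree P) : OLONFree (evalTop P V B) :=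
  fun a ha => holon a (ha.mono Edge.of_evalTop)

lemma atomsOf_evalTop_subset : atomsOf (evalTop P V B) ⊆ atomsOf P \ V := by
  rintro a ⟨_, ⟨r, hr, hhV, -, -, rfl⟩, rfl | ha | ha⟩
  · exact ⟨⟨r, hr, Or.inl rfl⟩, hhV⟩
  · obtain ⟨ha, haV⟩ := Finset.mem_filter.mp ha
    exact ⟨⟨r, hr, Or.inr (Or.inl ha)⟩, haV⟩
  · obtain ⟨ha, haV⟩ := Finset.mem_filter.mp ha
    exact ⟨⟨r, hr, Or.inr (Or.inr ha)⟩, haV⟩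

end Existence

theorem OLONFree.exists_answerSet {P : Set (GRule α)} (hP : P.Finite) (holon : OLONFree P) :
    ∃ A, IsAnswerSet P A := by
  rcases (atomsOf P).eq_empty_or_nonempty with hempty | hne
  · refine IsSigning.exists_answerSet (σ := fun _ => false) ?_
    rintro _ _ _ ⟨r, hr, rfl, -⟩
    exact absurd (hempty ▸ ⟨r, hr, Or.inl rfl⟩ : r.head ∈ (∅ : Set α)) (Set.notMem_empty _)
  obtain ⟨x, hx, hscc⟩ := exists_forall_mem_reachSet_mem_reachSet (atomsOf_finite hP) hne
  obtain ⟨B, hB⟩ := (holon.isSigning_reachSet hscc).exists_answerSet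
  have hlt : (atomsOf (evalTop P (reachSet P x) B)).ncard < (atomsOf P).ncard := by
    refine Set.ncard_lt_ncard ?_ (atomsOf_finite hP)
    refine (Set.ssubset_iff_of_subset fun a ha => (atomsOf_evalTop_subset ha).1).mpr
      ⟨x, hx, fun h => (atomsOf_evalTop_subset h).2 (Set.mem_insert x _)⟩
  obtain ⟨C, hC⟩ := OLONFree.exists_answerSet (evalTop_finite hP) (olonFree_evalTop holon)
  exact ⟨B ∪ C, (isSplittingSet_reachSet).isAnswerSet_union hB hC⟩
termination_by (atomsOf P).ncard

end ASP

open ASP in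
/-- If the finite ground normal program `P` is OLON-free and `R ⊆ P` is a
relevance-closed subprogram with atom set `B_R`, then `AS_{B_R}(P) = AS(R)`. -/
theorem projected_answerSets_eq {α : Type} (P R : Set (GRule α)) (hP : P.Finite)
    (holon : OLONFree P) (hR : RelevanceClosed P R) :
    {B | ∃ A ∈ AS P, B = A ∩ atomsOf R} = AS R := by
  have hV := hR.isSplittingSet
  have hbot := hR.sep_head_mem_atomsOf
  ext B
  constructor
  · rintro ⟨A, hA, rfl⟩
    have hAR := hV.isAnswerSet_inter hA
    rwa [hbot] at hAR
  · intro hB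
    replace hB : IsAnswerSet {r ∈ P | r.head ∈ atomsOf R} B := by rwa [hbot]
    obtain ⟨C, hC⟩ := OLONFree.exists_answerSet (evalTop_finite hP) (olonFree_evalTop holon)
    refine ⟨B ∪ C, hV.isAnswerSet_union hB hC, ?_⟩
    exact (union_inter_eq_of_subset_compl hB.subset_of_sep_head_mem
      hC.subset_compl_of_evalTop).symm
end

section
/- Let P₀ be a finite ground normal program over atoms α, ι a finite index set, and aᵢ, naᵢ (i ∈ ι) a family of 2·|ι| pairwise distinct atoms such that no aᵢ and no naᵢ is the head of a rule of P₀ and no naᵢ occurs anywhere in P₀. Let P* be P₀ together with the rules (aᵢ, ∅, {naᵢ}) and (naᵢ, ∅, {aᵢ}) for every i ∈ ι. Then AS(P*) = { A ∪ {naᵢ : i ∈ ι \ w} : w ⊆ ι, A ∈ AS(P₀ ∪ {(aᵢ, ∅, ∅) : i ∈ w}) }; that is, the answer sets of P* are exactly the answer sets of the programs obtained by adding, for each subset w of ι, the facts aᵢ (i ∈ w), extended with the atoms naᵢ for i ∉ w. -/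
open scoped Classical

namespace ASP

variable {α ι : Type}

theorem exists_head_of_answerSet {P : Set (GRule α)} {A : Set α} (h : IsAnswerSet P A) :
    ∀ x ∈ A, ∃ r ∈ P, r.head = x ∧ ∀ c ∈ r.neg, c ∉ A := by
  set C : Set α := {y | y ∈ A ∧ ∃ r ∈ P, r.head = y ∧ ∀ c ∈ r.neg, c ∉ A} with hCdef
  have hCA : C ⊆ A := fun y hy => hy.1
  have hmod : IsModelPos (glReduct P A) C := by
    rintro hb ⟨r, hrP, hneg, rfl⟩ hbody
    have hheadA : r.head ∈ A := h.1 (r.head, r.pos) ⟨r, hrP, hneg, rfl⟩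
      (fun b hb => hCA (hbody b hb))
    exact ⟨hheadA, r, hrP, rfl, hneg⟩
  intro x hx
  by_contra hcon
  have hne : C ≠ A := fun hEq => hcon ((hEq.symm ▸ hx : x ∈ C)).2
  exact h.2 C (Set.ssubset_iff_subset_ne.mpr ⟨hCA, hne⟩) hmod

theorem core_encoding (P0 : Set (GRule α)) (S : Finset ι) (a na : ι → α)
    (hinj_na : Set.InjOn na ↑S)
    (h_a_ne_na : ∀ i ∈ S, ∀ j ∈ S, a i ≠ na j)
    (hna_fresh : ∀ i ∈ S, na i ∉ atomsOf P0)
    (w : Finset ι) (hw : w ⊆ S) (A : Set α)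
    (hA_na : ∀ j ∈ S, na j ∉ A)
    (hAa : ∀ i ∈ S, (a i ∈ A ↔ i ∈ w)) :
    IsAnswerSet
      (P0 ∪ {r | ∃ i ∈ S, r = ⟨a i, ∅, {na i}⟩} ∪ {r | ∃ i ∈ S, r = ⟨na i, ∅, {a i}⟩})
      (A ∪ na '' ↑(S \ w)) ↔ IsAnswerSet (worldProg P0 a w) A := by
  set B : Set α := A ∪ na '' ↑(S \ w) with hBdef
  have hmemna : ∀ x, x ∈ na '' ↑(S \ w) ↔ ∃ j, j ∈ S ∧ j ∉ w ∧ na j = x := by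
    intro x
    constructor
    · rintro ⟨j, hj, rfl⟩
      have := Finset.mem_sdiff.mp (Finset.mem_coe.mp hj)
      exact ⟨j, this.1, this.2, rfl⟩
    · rintro ⟨j, hjS, hjw, rfl⟩
      exact ⟨j, Finset.mem_coe.mpr (Finset.mem_sdiff.mpr ⟨hjS, hjw⟩), rfl⟩
  have hAB : A ⊆ B := Set.subset_union_left
  have hBna : ∀ j ∈ S, (na j ∈ B ↔ j ∉ w) := by
    intro j hjS
    constructor
    · rintro (h | h)
      · exact absurd h (hA_na j hjS)
      · obtain ⟨k, hkS, hkw, hk⟩ := (hmemna _).mp h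
        rwa [hinj_na hkS hjS hk] at hkw
    · intro hjw
      exact Or.inr ((hmemna _).mpr ⟨j, hjS, hjw, rfl⟩)
  have hBa : ∀ i ∈ S, (a i ∈ B ↔ i ∈ w) := by
    intro i hiS
    constructor
    · rintro (h | h)
      · exact (hAa i hiS).mp h
      · obtain ⟨j, hjS, _, hj⟩ := (hmemna _).mp h
        exact absurd hj.symm (h_a_ne_na i hiS j hjS)
    · intro hiw
      exact Or.inl ((hAa i hiS).mpr hiw)
  have hatomB : ∀ x ∈ atomsOf P0, (x ∈ B ↔ x ∈ A) := by
    intro x hx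
    constructor
    · rintro (h | h)
      · exact h
      · obtain ⟨j, hjS, _, hj⟩ := (hmemna _).mp h
        exact absurd (hj.symm ▸ hx) (hna_fresh j hjS)
    · exact Or.inl
  have hposA : ∀ r ∈ worldProg P0 a w, ∀ b ∈ r.pos, b ∈ B → b ∈ A := by
    intro r hr b hbp hbB
    rcases hbB with h | h
    · exact h
    · exfalso
      obtain ⟨j, hjS, _, hj⟩ := (hmemna _).mp h
      rcases hr with hr | ⟨i, _, rfl⟩
      · exact hna_fresh j hjS (hj.symm ▸ (⟨r, hr, Or.inr (Or.inl hbp)⟩ : b ∈ atomsOf P0))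
      · exact absurd hbp (Finset.notMem_empty b)
  have hheadA : ∀ r ∈ worldProg P0 a w, r.head ∈ B → r.head ∈ A := by
    intro r hr hB
    rcases hB with h | h
    · exact h
    · exfalso
      obtain ⟨j, hjS, _, hj⟩ := (hmemna _).mp h
      rcases hr with hr | ⟨i, hiw, rfl⟩
      · exact hna_fresh j hjS (hj.symm ▸ (⟨r, hr, Or.inl rfl⟩ : r.head ∈ atomsOf P0))
      · exact h_a_ne_na i (hw hiw) j hjS hj.symm
  have hred : glReduct (P0 ∪ {r | ∃ i ∈ S, r = ⟨a i, ∅, {na i}⟩}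
        ∪ {r | ∃ i ∈ S, r = ⟨na i, ∅, {a i}⟩}) B
      = glReduct (worldProg P0 a w) A
        ∪ {hb | ∃ i, i ∈ S ∧ i ∉ w ∧ hb = (na i, ∅)} := by
    ext hb
    constructor
    · rintro ⟨r, hr, hneg, rfl⟩
      rcases hr with (hr | ⟨i, hiS, rfl⟩) | ⟨i, hiS, rfl⟩
      · exact Or.inl ⟨r, Or.inl hr, fun c hc hcA => hneg c hc (hAB hcA), rfl⟩
      · have hiw : i ∈ w := by
          by_contra hiw
          exact hneg (na i) (Finset.mem_singleton_self _) ((hBna i hiS).mpr hiw)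
        exact Or.inl ⟨⟨a i, ∅, ∅⟩, Or.inr ⟨i, hiw, rfl⟩,
          fun c hc => absurd hc (Finset.notMem_empty c), rfl⟩
      · have hiw : i ∉ w := fun hiw =>
          hneg (a i) (Finset.mem_singleton_self _) ((hBa i hiS).mpr hiw)
        exact Or.inr ⟨i, hiS, hiw, rfl⟩
    · rintro (⟨r, hr, hneg, rfl⟩ | ⟨i, hiS, hiw, rfl⟩)
      · rcases hr with hr | ⟨i, hiw, rfl⟩
        · exact ⟨r, Or.inl (Or.inl hr),
            fun c hc hcB => hneg c hc ((hatomB c ⟨r, hr, Or.inr (Or.inr hc)⟩).mp hcB), rfl⟩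
        · refine ⟨⟨a i, ∅, {na i}⟩, Or.inl (Or.inr ⟨i, hw hiw, rfl⟩), ?_, rfl⟩
          intro c hc
          rw [Finset.mem_singleton] at hc
          subst hc
          exact fun hB => ((hBna i (hw hiw)).mp hB) hiw
      · refine ⟨⟨na i, ∅, {a i}⟩, Or.inr ⟨i, hiS, rfl⟩, ?_, rfl⟩
        intro c hc
        rw [Finset.mem_singleton] at hc
        subst hc
        exact fun hB => hiw ((hBa i hiS).mp hB)
  constructor
  · rintro ⟨hBmod, hBmin⟩
    rw [hred] at hBmod hBmin
    have hAmod : IsModelPos (glReduct (worldProg P0 a w) A) A := by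
      rintro hb hhb hbody
      obtain ⟨r, hr, hneg, rfl⟩ := hhb
      have hheadB : r.head ∈ B := hBmod (r.head, r.pos) (Or.inl ⟨r, hr, hneg, rfl⟩)
        (fun b hbmem => hAB (hbody b hbmem))
      exact hheadA r hr hheadB
    refine ⟨hAmod, fun D hD hDmod => ?_⟩
    obtain ⟨x, hxA, hxD⟩ := Set.exists_of_ssubset hD
    have hxIm : x ∉ na '' ↑(S \ w) := fun hx => by
      obtain ⟨j, hjS, _, hj⟩ := (hmemna _).mp hx
      exact hA_na j hjS (hj.symm ▸ hxA)
    have hssub : D ∪ na '' ↑(S \ w) ⊂ B := by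
      refine Set.ssubset_iff_subset_ne.mpr
        ⟨Set.union_subset_union_left _ hD.subset, fun hEq => ?_⟩
      have : x ∈ D ∪ na '' ↑(S \ w) := hEq.symm ▸ (hAB hxA : x ∈ B)
      rcases this with h | h
      · exact hxD h
      · exact hxIm h
    refine hBmin _ hssub ?_
    rintro hb (⟨r, hr, hneg, rfl⟩ | ⟨i, hiS, hiw, rfl⟩) hbody
    · have hbD : ∀ b ∈ r.pos, b ∈ D := by
        intro b hbp
        rcases hbody b hbp with h | h
        · exact h
        · exfalso
          obtain ⟨j, hjS, _, hj⟩ := (hmemna _).mp h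
          rcases hr with hr | ⟨i, hiw, rfl⟩
          · exact hna_fresh j hjS (hj.symm ▸ (⟨r, hr, Or.inr (Or.inl hbp)⟩ : b ∈ atomsOf P0))
          · exact absurd hbp (Finset.notMem_empty b)
      exact Or.inl (hDmod (r.head, r.pos) ⟨r, hr, hneg, rfl⟩ hbD)
    · exact Or.inr ((hmemna _).mpr ⟨i, hiS, hiw, rfl⟩)
  · rintro ⟨hAmod, hAmin⟩
    constructor
    · rw [hred]
      rintro hb (⟨r, hr, hneg, rfl⟩ | ⟨i, hiS, hiw, rfl⟩) hbody
      · exact hAB (hAmod (r.head, r.pos) ⟨r, hr, hneg, rfl⟩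
          (fun b hbmem => hposA r hr b hbmem (hbody b hbmem)))
      · exact Or.inr ((hmemna _).mpr ⟨i, hiS, hiw, rfl⟩)
    · intro C hC hCmod
      rw [hred] at hCmod
      have hDmod : IsModelPos (glReduct (worldProg P0 a w) A) (C ∩ A) := by
        intro hb hhb hbody
        have h1 : hb.1 ∈ C := hCmod hb (Or.inl hhb) (fun b hbmem => (hbody b hbmem).1)
        have h2 : hb.1 ∈ A := hAmod hb hhb (fun b hbmem => (hbody b hbmem).2)
        exact ⟨h1, h2⟩
      have hnotss : ¬ (C ∩ A ⊂ A) := fun hss => hAmin _ hss hDmod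
      have hAC : A ⊆ C := by
        intro x hxA
        by_contra hxC
        refine hnotss (Set.ssubset_iff_subset_ne.mpr
          ⟨Set.inter_subset_right, fun hEq => hxC ?_⟩)
        exact ((hEq.symm ▸ hxA : x ∈ C ∩ A)).1
      have hnaC : na '' ↑(S \ w) ⊆ C := by
        rintro x ⟨j, hj, rfl⟩
        have hj' := Finset.mem_sdiff.mp (Finset.mem_coe.mp hj)
        exact hCmod (na j, ∅) (Or.inr ⟨j, hj'.1, hj'.2, rfl⟩)
          (fun b hb => absurd hb (Finset.notMem_empty b))
      exact hC.ne (Set.Subset.antisymm hC.subset (Set.union_subset hAC hnaC))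

end ASP

open ASP in
/-- Encoding probabilistic facts by even loops: the answer sets of
`P₀ ∪ {aᵢ ← not naᵢ, naᵢ ← not aᵢ : i ∈ S}` are exactly the answer sets of the programs
`P₀ ∪ {aᵢ : i ∈ w}` for `w ⊆ S`, extended with the atoms `naᵢ` for `i ∈ S \ w`. -/
theorem answerSets_of_choice_encoding {α ι : Type} (P0 : Set (GRule α)) (hP : P0.Finite)
    (S : Finset ι) (a na : ι → α)
    (hinj_a : Set.InjOn a ↑S) (hinj_na : Set.InjOn na ↑S)
    (h_a_ne_na : ∀ i ∈ S, ∀ j ∈ S, a i ≠ na j)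
    (hhead_a : ∀ i ∈ S, ∀ r ∈ P0, r.head ≠ a i)
    (hna_fresh : ∀ i ∈ S, na i ∉ atomsOf P0) :
    AS (P0 ∪ {r | ∃ i ∈ S, r = ⟨a i, ∅, {na i}⟩} ∪ {r | ∃ i ∈ S, r = ⟨na i, ∅, {a i}⟩})
      = {B | ∃ w : Finset ι, w ⊆ S ∧
          ∃ A ∈ AS (worldProg P0 a w), B = A ∪ na '' ↑(S \ w)} := by
  ext B
  simp only [Set.mem_setOf_eq]
  constructor
  · intro hB
    have hB' : IsAnswerSet
        (P0 ∪ {r | ∃ i ∈ S, r = ⟨a i, ∅, {na i}⟩} ∪ {r | ∃ i ∈ S, r = ⟨na i, ∅, {a i}⟩}) B := hB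
    have hkey : ∀ j ∈ S, (na j ∈ B ↔ a j ∉ B) := by
      intro j hjS
      constructor
      · intro hnaB haB
        obtain ⟨r, hr, hhead, hneg⟩ := exists_head_of_answerSet hB' (na j) hnaB
        rcases hr with (hr | ⟨i, hiS, rfl⟩) | ⟨i, hiS, rfl⟩
        · exact hna_fresh j hjS (hhead ▸ (⟨r, hr, Or.inl rfl⟩ : r.head ∈ atomsOf P0))
        · exact h_a_ne_na i hiS j hjS hhead
        · have hij : i = j := hinj_na hiS hjS hhead
          exact hneg (a i) (Finset.mem_singleton_self _) (hij.symm ▸ haB)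
      · intro haB
        refine hB'.1 (na j, ∅) ⟨⟨na j, ∅, {a j}⟩, Or.inr ⟨j, hjS, rfl⟩, ?_, rfl⟩
          (fun b hb => absurd hb (Finset.notMem_empty b))
        intro c hc
        rw [Finset.mem_singleton] at hc
        subst hc
        exact haB
    set w : Finset ι := S.filter (fun i => a i ∈ B) with hwdef
    set A : Set α := B \ na '' ↑S with hAdef
    have hA_na : ∀ j ∈ S, na j ∉ A := fun j hjS h =>
      h.2 ⟨j, Finset.mem_coe.mpr hjS, rfl⟩
    have hAa : ∀ i ∈ S, (a i ∈ A ↔ i ∈ w) := by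
      intro i hiS
      constructor
      · intro h
        exact Finset.mem_filter.mpr ⟨hiS, h.1⟩
      · intro h
        refine ⟨(Finset.mem_filter.mp h).2, ?_⟩
        rintro ⟨j, hj, hji⟩
        exact h_a_ne_na i hiS j (Finset.mem_coe.mp hj) hji.symm
    have hBeq : B = A ∪ na '' ↑(S \ w) := by
      ext x
      constructor
      · intro hxB
        by_cases hx : x ∈ na '' ↑S
        · obtain ⟨j, hj, rfl⟩ := hx
          have hjS := Finset.mem_coe.mp hj
          have hjw : j ∉ w := fun hjw =>
            ((hkey j hjS).mp hxB) (Finset.mem_filter.mp hjw).2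
          exact Or.inr ⟨j, Finset.mem_coe.mpr (Finset.mem_sdiff.mpr ⟨hjS, hjw⟩), rfl⟩
        · exact Or.inl ⟨hxB, hx⟩
      · rintro (h | ⟨j, hj, rfl⟩)
        · exact h.1
        · have hj' := Finset.mem_sdiff.mp (Finset.mem_coe.mp hj)
          refine (hkey j hj'.1).mpr (fun haB => hj'.2 ?_)
          exact Finset.mem_filter.mpr ⟨hj'.1, haB⟩
    have hcore := (core_encoding P0 S a na hinj_na h_a_ne_na hna_fresh w
      (Finset.filter_subset _ _) A hA_na hAa).mp (hBeq ▸ hB')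
    exact ⟨w, Finset.filter_subset _ _, A, hcore, hBeq⟩
  · rintro ⟨w, hwS, A, hA, rfl⟩
    have hA' : IsAnswerSet (worldProg P0 a w) A := hA
    have hA_na : ∀ j ∈ S, na j ∉ A := by
      intro j hjS h
      obtain ⟨r, hr, hhead, _⟩ := exists_head_of_answerSet hA' (na j) h
      rcases hr with hr | ⟨i, hiw, rfl⟩
      · exact hna_fresh j hjS (hhead ▸ (⟨r, hr, Or.inl rfl⟩ : r.head ∈ atomsOf P0))
      · exact h_a_ne_na i (hwS hiw) j hjS hhead
    have hAa : ∀ i ∈ S, (a i ∈ A ↔ i ∈ w) := by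
      intro i hiS
      constructor
      · intro h
        obtain ⟨r, hr, hhead, _⟩ := exists_head_of_answerSet hA' (a i) h
        rcases hr with hr | ⟨k, hkw, rfl⟩
        · exact absurd hhead (hhead_a i hiS r hr)
        · exact (hinj_a (hwS hkw) hiS hhead) ▸ hkw
      · intro hiw
        exact hA'.1 (a i, ∅) ⟨⟨a i, ∅, ∅⟩, Or.inr ⟨i, hiw, rfl⟩,
          fun c hc => absurd hc (Finset.notMem_empty c), rfl⟩
          (fun b hb => absurd hb (Finset.notMem_empty b))
    exact (core_encoding P0 S a na hinj_na h_a_ne_na hna_fresh w hwS A hA_na hAa).mpr hA'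
end
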